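/- Let V be a real normed space satisfying the Aronszajn criterion. If p and q are nonzero vectors with ‖p + q‖ = ‖p - q‖, then for all integers a and b, ‖a • p + b • q‖ = ‖a • p - b • q‖. -/

import Mathlib

/-! Applying the criterion to the pairs `(x + n • y, y)` and `(x - n • y, -y)` propagates
`‖x + n • y‖ = ‖x - n • y‖` from `n - 1` and `n` to `n + 1`, so `‖x + y‖ = ‖x - y‖` yields it
for all integers `n`. Using this first with `x = p, y = q` and then with `x = b • q, y = p`
gives the theorem. -/

def AronszajnCriterion (V : Type*) [SeminormedAddCommGroup V] : Prop :=
  ∀ v₁ w₁ v₂ w₂ : V, ‖v₁‖ = ‖v₂‖ → ‖w₁‖ = ‖w₂‖ → ‖v₁ - w₁‖ = ‖v₂ - w₂‖ → ‖v₁ + w₁‖ = ‖v₂ + w₂‖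

namespace AronszajnCriterion

variable {V : Type*} [SeminormedAddCommGroup V]

theorem norm_add_eq_norm_sub {u v y : V} (hV : AronszajnCriterion V) (h : ‖u‖ = ‖v‖)
    (h' : ‖u - y‖ = ‖v + y‖) : ‖u + y‖ = ‖v - y‖ := by
  simpa only [← sub_eq_add_neg] using hV u y v (-y) h (norm_neg y).symm (by rwa [sub_neg_eq_add])

theorem norm_add_nsmul_eq_norm_sub_nsmul {x y : V} (hV : AronszajnCriterion V)
    (h : ‖x + y‖ = ‖x - y‖) (n : ℕ) : ‖x + n • y‖ = ‖x - n • y‖ := by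
  induction n using Nat.twoStepInduction with
  | zero => simp
  | one => simpa using h
  | more n ih₀ ih₁ =>
    have hstep := hV.norm_add_eq_norm_sub (y := y) ih₁ (by convert ih₀ using 2 <;> module)
    convert hstep using 2 <;> module

theorem norm_add_zsmul_eq_norm_sub_zsmul {x y : V} (hV : AronszajnCriterion V)
    (h : ‖x + y‖ = ‖x - y‖) (n : ℤ) : ‖x + n • y‖ = ‖x - n • y‖ := by
  obtain ⟨m, rfl | rfl⟩ := Int.eq_nat_or_neg n
  · simpa only [natCast_zsmul] using hV.norm_add_nsmul_eq_norm_sub_nsmul h m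
  · simpa only [neg_smul, natCast_zsmul, ← sub_eq_add_neg, sub_neg_eq_add]
      using (hV.norm_add_nsmul_eq_norm_sub_nsmul h m).symm

end AronszajnCriterion

theorem stmt_2_general (V : Type*) [NormedAddCommGroup V]
    (hA : ∀ v₁ w₁ v₂ w₂ : V, ‖v₁‖ = ‖v₂‖ → ‖w₁‖ = ‖w₂‖ → ‖v₁ - w₁‖ = ‖v₂ - w₂‖ → ‖v₁ + w₁‖ = ‖v₂ + w₂‖)
    (p q : V) (hpq : ‖p + q‖ = ‖p - q‖) :
    ∀ a b : ℤ, ‖a • p + b • q‖ = ‖a • p - b • q‖ := by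
  intro a b
  have hV : AronszajnCriterion V := hA
  have hb : ‖b • q + p‖ = ‖b • q - p‖ := by
    rw [add_comm, ← norm_neg (b • q - p), neg_sub]
    exact hV.norm_add_zsmul_eq_norm_sub_zsmul hpq b
  rw [add_comm, ← norm_neg (a • p - b • q), neg_sub]
  exact hV.norm_add_zsmul_eq_norm_sub_zsmul hb a

theorem stmt_2 (V : Type*) [NormedAddCommGroup V] [NormedSpace ℝ V]
    (hA : ∀ v₁ w₁ v₂ w₂ : V, ‖v₁‖ = ‖v₂‖ → ‖w₁‖ = ‖w₂‖ → ‖v₁ - w₁‖ = ‖v₂ - w₂‖ → ‖v₁ + w₁‖ = ‖v₂ + w₂‖)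
    (p q : V) (hp : p ≠ 0) (hq : q ≠ 0) (hpq : ‖p + q‖ = ‖p - q‖) :
    ∀ a b : ℤ, ‖a • p + b • q‖ = ‖a • p - b • q‖ :=
  stmt_2_general V hA p q hpq
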